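/- arXiv:1902.03015 — 3 statements merged into one kernel-verified Lean document; each statement's English description precedes it below -/
import Mathlib

section
/- Suppose δ₁, δ₂ ∈ ℝ with δ₁ + δ₂ > 0, and real numbers a := ‖e₁‖_T, u := ‖u₁‖_T, v := ‖u₂‖_T, y := ‖y₁‖_T, w := ‖y₂‖_T satisfy: δ₁a² + β₁' + δ₂(u² - 2ua + a²) + β₂' ≤ u·y + v·w, y ≤ γ₁a + β₁, and w ≤ u + a. Then (δ₁+δ₂)a² ≤ a[(2|δ₂| + γ₁)u + v] + uv + β₁u + |δ₂|u² - β₁' - β₂'; consequently a is bounded by a quantity depending affinely-quadratically on u and v (via the quadratic formula), uniformly in T. -/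
/-!
Bounding `u y` and `v w` by the gain inequalities and the cross term `-2 δ₂ u a` by
`-2 |δ₂| u a` turns the dissipation inequality into the quadratic inequality
`(δ₁ + δ₂) a² ≤ a B + C`. Any solution of `c x² ≤ B x + C` with `c > 0` lies below the larger
root of `c x² - B x - C`, and the discriminant is automatically nonnegative because
`B² + 4 c C ≥ (2 c x - B)²`.
-/

theorem le_quadratic_root_of_mul_sq_le {c B C x : ℝ} (hc : 0 < c) (h : c * x ^ 2 ≤ B * x + C) :
    x ≤ (B + √(B ^ 2 + 4 * c * C)) / (2 * c) := by
  have hdisc : (2 * c * x - B) ^ 2 ≤ B ^ 2 + 4 * c * C := by nlinarith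
  have hroot : 2 * c * x - B ≤ √(B ^ 2 + 4 * c * C) :=
    calc 2 * c * x - B ≤ |2 * c * x - B| := le_abs_self _
      _ = √((2 * c * x - B) ^ 2) := (Real.sqrt_sq_eq_abs _).symm
      _ ≤ √(B ^ 2 + 4 * c * C) := Real.sqrt_le_sqrt hdisc
  rw [le_div_iff₀ (by positivity)]
  linarith

theorem mul_sq_sub_abs_mul_le {δ u a : ℝ} (hua : 0 ≤ u * a) :
    δ * a ^ 2 - 2 * |δ| * (u * a) - |δ| * u ^ 2 ≤ δ * (u ^ 2 - 2 * u * a + a ^ 2) := by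
  nlinarith [mul_le_mul_of_nonneg_right (le_abs_self δ) hua,
    mul_le_mul_of_nonneg_right (neg_abs_le δ) (sq_nonneg u)]

theorem stmt2_general (δ1 δ2 β1 β1' β2' γ1 a u v y w : ℝ)
    (ha : 0 ≤ a) (hu : 0 ≤ u) (hv : 0 ≤ v)
    (hδ : 0 < δ1 + δ2)
    (h1 : δ1 * a ^ 2 + β1' + δ2 * (u ^ 2 - 2 * u * a + a ^ 2) + β2' ≤ u * y + v * w)
    (h2 : y ≤ γ1 * a + β1)
    (h3 : w ≤ u + a) :
    (δ1 + δ2) * a ^ 2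
      ≤ a * ((2 * |δ2| + γ1) * u + v) + u * v + β1 * u + |δ2| * u ^ 2 - β1' - β2' ∧
    a ≤ (((2 * |δ2| + γ1) * u + v) +
          Real.sqrt (((2 * |δ2| + γ1) * u + v) ^ 2 +
            4 * (δ1 + δ2) * max 0 (u * v + β1 * u + |δ2| * u ^ 2 - β1' - β2'))) /
        (2 * (δ1 + δ2)) := by
  have hquad : (δ1 + δ2) * a ^ 2
      ≤ a * ((2 * |δ2| + γ1) * u + v) + u * v + β1 * u + |δ2| * u ^ 2 - β1' - β2' := by
    have hcross := mul_sq_sub_abs_mul_le (δ := δ2) (mul_nonneg hu ha)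
    have hy := mul_le_mul_of_nonneg_left h2 hu
    have hw := mul_le_mul_of_nonneg_left h3 hv
    linarith
  refine ⟨hquad, le_quadratic_root_of_mul_sq_le hδ ?_⟩
  linarith [le_max_right 0 (u * v + β1 * u + |δ2| * u ^ 2 - β1' - β2')]

/-- The key inequality manipulation in the proof of the generalized passivity theorem:
from `δ₁a² + β₁' + δ₂(u² - 2ua + a²) + β₂' ≤ uy + vw`, `y ≤ γ₁a + β₁`, `w ≤ u + a`
(all quantities being truncated norms, hence nonnegative, and `δ₁ + δ₂ > 0`), deduce
`(δ₁+δ₂)a² ≤ a[(2|δ₂|+γ₁)u + v] + uv + β₁u + |δ₂|u² - β₁' - β₂'`, and consequently the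
bound on `a` given by the quadratic formula, depending only on `u` and `v`. -/
theorem stmt2 (δ1 δ2 β1 β1' β2' γ1 a u v y w : ℝ)
    (ha : 0 ≤ a) (hu : 0 ≤ u) (hv : 0 ≤ v) (hy : 0 ≤ y) (hw : 0 ≤ w) (hγ1 : 0 ≤ γ1)
    (hδ : 0 < δ1 + δ2)
    (h1 : δ1 * a ^ 2 + β1' + δ2 * (u ^ 2 - 2 * u * a + a ^ 2) + β2' ≤ u * y + v * w)
    (h2 : y ≤ γ1 * a + β1)
    (h3 : w ≤ u + a) :
    (δ1 + δ2) * a ^ 2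
      ≤ a * ((2 * |δ2| + γ1) * u + v) + u * v + β1 * u + |δ2| * u ^ 2 - β1' - β2' ∧
    a ≤ (((2 * |δ2| + γ1) * u + v) +
          Real.sqrt (((2 * |δ2| + γ1) * u + v) ^ 2 +
            4 * (δ1 + δ2) * max 0 (u * v + β1 * u + |δ2| * u ^ 2 - β1' - β2'))) /
        (2 * (δ1 + δ2)) :=
  stmt2_general δ1 δ2 β1 β1' β2' γ1 a u v y w ha hu hv hδ h1 h2 h3
end

section
/- (Extended small gain theorem, version (ii)) Consider the well-posed feedback loop e₁ = u₁ - (ρ ∘ H₂ ∘ ρ⁻¹)e₂, e₂ = u₂ + (ρ⁻¹ ∘ H₁ ∘ ρ)e₁. If γ₁⁰ := γ⁰(ρ⁻¹∘H₁∘ρ) < ∞, γ₂⁰ := γ⁰(ρ∘H₂∘ρ⁻¹) < ∞, and γ₁⁰γ₂⁰ < 1, then there is a constant C such that ‖e₁‖_T + ‖e₂‖_T ≤ C(‖u₁‖_T + ‖u₂‖_T) for all T; in particular u₁, u₂ ∈ S^n implies e₁, e₂ ∈ S^n. -/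
noncomputable section

variable {E : Type*} [NormedAddCommGroup E] [InnerProductSpace ℝ E]

/-- Truncation operator `P_T`. -/
def trunc (T : ℤ) (x : ℤ → E) : ℤ → E := fun t => if t ≤ T then x t else 0

/-- Membership in the extended signal space `S_e^n`: left-bounded support. -/
def SeP (x : ℤ → E) : Prop := ∃ a : ℤ, ∀ t, t < a → x t = 0

/-- Truncated inner product. -/
def innerT (T : ℤ) (x y : ℤ → E) : ℝ := ∑' t : ℤ, (inner ℝ (trunc T x t) (trunc T y t) : ℝ)

/-- Truncated norm `‖x‖_T`. -/
def normT (T : ℤ) (x : ℤ → E) : ℝ := Real.sqrt (innerT T x x)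

/-- Membership in `S^n`: an extended-space signal with uniformly bounded truncated norms. -/
def memS (x : ℤ → E) : Prop := SeP x ∧ ∃ M : ℝ, ∀ T : ℤ, normT T x ≤ M

/-- The action of `ρ > 0` on signals: `(ρ ∘ x)(t) = ρᵗ x(t)`. -/
def rhoAct (ρ : ℝ) (x : ℤ → E) : ℤ → E := fun t => ρ ^ t • x t

/-- The direct-chain operator `ρ⁻¹ ∘ H₁ ∘ ρ`. -/
def dirOp (ρ : ℝ) (H1 : (ℤ → E) → (ℤ → E)) : (ℤ → E) → (ℤ → E) :=
  fun x => rhoAct ρ⁻¹ (H1 (rhoAct ρ x))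

/-- The feedback-chain operator `ρ ∘ H₂ ∘ ρ⁻¹`. -/
def fbOp (ρ : ℝ) (H2 : (ℤ → E) → (ℤ → E)) : (ℤ → E) → (ℤ → E) :=
  fun x => rhoAct ρ (H2 (rhoAct ρ⁻¹ x))

/-- The set whose infimum is the unbiased gain `γ⁰(H)`. -/
def gainSet (H : (ℤ → E) → (ℤ → E)) : Set ℝ :=
  {δ : ℝ | 0 ≤ δ ∧ ∀ x, SeP x → ∀ T : ℤ, normT T (H x) ≤ δ * normT T x}

/-- The set whose infimum is the biased gain `γ(H)`. -/
def gainSetB (H : (ℤ → E) → (ℤ → E)) : Set ℝ :=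
  {δ : ℝ | 0 ≤ δ ∧ ∃ β : ℝ, ∀ x, SeP x → ∀ T : ℤ, normT T (H x) ≤ δ * normT T x + β}

/-! The truncated norms satisfy the triangle inequality, so the loop equations give
`‖e₁‖_T ≤ ‖u₁‖_T + g₂‖e₂‖_T` and `‖e₂‖_T ≤ ‖u₂‖_T + g₁‖e₁‖_T` for any admissible gains
`g₁, g₂`. Since `γ₁⁰γ₂⁰ < 1`, such gains can be chosen with `g₁g₂ < 1`, and substituting one
inequality into the other bounds `(1 - g₁g₂)(‖e₁‖_T + ‖e₂‖_T)` by a multiple of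
`‖u₁‖_T + ‖u₂‖_T`, uniformly in `T`. -/

section

variable {F : Type*} [NormedAddCommGroup F]

lemma SeP.add {x y : ℤ → F} (hx : SeP x) (hy : SeP y) : SeP (x + y) := by
  obtain ⟨a, ha⟩ := hx
  obtain ⟨b, hb⟩ := hy
  refine ⟨min a b, fun t ht => ?_⟩
  simp [ha t (ht.trans_le (min_le_left a b)), hb t (ht.trans_le (min_le_right a b))]

lemma SeP.neg {x : ℤ → F} (hx : SeP x) : SeP (-x) := by
  obtain ⟨a, ha⟩ := hx
  exact ⟨a, fun t ht => by simp [ha t ht]⟩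

lemma SeP.sub {x y : ℤ → F} (hx : SeP x) (hy : SeP y) : SeP (x - y) := by
  rw [sub_eq_add_neg]
  exact hx.add hy.neg

lemma Finset.sqrt_sum_norm_add_sq_le {ι : Type*} (s : Finset ι) (f g : ι → F) :
    Real.sqrt (∑ i ∈ s, ‖f i + g i‖ ^ 2) ≤
      Real.sqrt (∑ i ∈ s, ‖f i‖ ^ 2) + Real.sqrt (∑ i ∈ s, ‖g i‖ ^ 2) := by
  have h := norm_add_le (E := PiLp 2 fun _ : s => F)
    (WithLp.toLp 2 fun i => f i) (WithLp.toLp 2 fun i => g i)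
  simp only [PiLp.norm_eq_of_L2, PiLp.add_apply] at h
  simpa only [Finset.sum_coe_sort s fun i => ‖f i + g i‖ ^ 2,
    Finset.sum_coe_sort s fun i => ‖f i‖ ^ 2, Finset.sum_coe_sort s fun i => ‖g i‖ ^ 2] using h

end

lemma normT_nonneg (T : ℤ) (x : ℤ → E) : 0 ≤ normT T x := Real.sqrt_nonneg _

lemma normT_neg (T : ℤ) (x : ℤ → E) : normT T (-x) = normT T x := by
  unfold normT innerT
  congr 1
  refine tsum_congr fun t => ?_
  by_cases h : t ≤ T <;> simp [trunc, h]

lemma normT_eq_sqrt_sum_Icc (T : ℤ) {x : ℤ → E} {a : ℤ} (hx : ∀ t, t < a → x t = 0) :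
    normT T x = Real.sqrt (∑ t ∈ Finset.Icc a T, ‖x t‖ ^ 2) := by
  unfold normT innerT
  rw [tsum_eq_sum (s := Finset.Icc a T)]
  · refine congrArg _ (Finset.sum_congr rfl fun t ht => ?_)
    simp [trunc, (Finset.mem_Icc.mp ht).2]
  · intro t ht
    rw [Finset.mem_Icc, not_and_or, not_le, not_le] at ht
    rcases ht with ht | ht
    · simp [trunc, hx t ht]
    · simp [trunc, not_le.mpr ht]

lemma normT_add_le (T : ℤ) {x y : ℤ → E} (hx : SeP x) (hy : SeP y) :
    normT T (x + y) ≤ normT T x + normT T y := by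
  obtain ⟨a, ha⟩ := hx
  obtain ⟨b, hb⟩ := hy
  have hxa : ∀ t, t < min a b → x t = 0 := fun t ht => ha t (ht.trans_le (min_le_left a b))
  have hya : ∀ t, t < min a b → y t = 0 := fun t ht => hb t (ht.trans_le (min_le_right a b))
  have hxya : ∀ t, t < min a b → (x + y) t = 0 := fun t ht => by simp [hxa t ht, hya t ht]
  rw [normT_eq_sqrt_sum_Icc T hxa, normT_eq_sqrt_sum_Icc T hya, normT_eq_sqrt_sum_Icc T hxya]
  exact Finset.sqrt_sum_norm_add_sq_le _ x y

lemma normT_sub_le (T : ℤ) {x y : ℤ → E} (hx : SeP x) (hy : SeP y) :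
    normT T (x - y) ≤ normT T x + normT T y := by
  rw [sub_eq_add_neg, ← normT_neg T y]
  exact normT_add_le T hx hy.neg

lemma exists_mem_mul_lt_one_of_csInf_mul_lt_one {S : Set ℝ} (hS : S.Nonempty) {c : ℝ}
    (hc : 0 ≤ c) (h : sInf S * c < 1) : ∃ g ∈ S, g * c < 1 := by
  rcases hc.eq_or_lt with rfl | hc
  · obtain ⟨g, hg⟩ := hS
    exact ⟨g, hg, by simp⟩
  · obtain ⟨g, hg, hlt⟩ := exists_lt_of_csInf_lt hS ((lt_div_iff₀ hc).mpr h)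
    exact ⟨g, hg, (lt_div_iff₀ hc).mp hlt⟩

lemma sInf_gainSet_nonneg {H : (ℤ → E) → (ℤ → E)} (hH : (gainSet H).Nonempty) :
    0 ≤ sInf (gainSet H) :=
  le_csInf hH fun _ hδ => hδ.1

lemma exists_mem_gainSet_mul_lt_one {H1 H2 : (ℤ → E) → (ℤ → E)}
    (h1 : (gainSet H1).Nonempty) (h2 : (gainSet H2).Nonempty)
    (hsmall : sInf (gainSet H1) * sInf (gainSet H2) < 1) :
    ∃ g1 ∈ gainSet H1, ∃ g2 ∈ gainSet H2, g1 * g2 < 1 := by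
  obtain ⟨g1, hg1, hlt⟩ :=
    exists_mem_mul_lt_one_of_csInf_mul_lt_one h1 (sInf_gainSet_nonneg h2) hsmall
  obtain ⟨g2, hg2, hlt₂⟩ :=
    exists_mem_mul_lt_one_of_csInf_mul_lt_one h2 hg1.1 (by rwa [mul_comm])
  exact ⟨g1, hg1, g2, hg2, mul_comm g2 g1 ▸ hlt₂⟩

lemma add_le_of_small_gain {x1 x2 u1 u2 g1 g2 : ℝ} (hu1 : 0 ≤ u1) (hu2 : 0 ≤ u2)
    (hg1 : 0 ≤ g1) (hg2 : 0 ≤ g2) (hg : g1 * g2 < 1)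
    (h1 : x1 ≤ u1 + g2 * x2) (h2 : x2 ≤ u2 + g1 * x1) :
    x1 + x2 ≤ (2 + g1 + g2) / (1 - g1 * g2) * (u1 + u2) := by
  have hk : 0 < 1 - g1 * g2 := by linarith
  have hx1 : (1 - g1 * g2) * x1 ≤ u1 + g2 * u2 := by nlinarith [mul_le_mul_of_nonneg_left h2 hg2]
  have hx2 : (1 - g1 * g2) * x2 ≤ u2 + g1 * u1 := by nlinarith [mul_le_mul_of_nonneg_left h1 hg1]
  rw [div_mul_eq_mul_div, le_div_iff₀ hk]
  nlinarith [mul_nonneg hg1 hu2, mul_nonneg hg2 hu1]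

lemma normT_add_le_of_feedback {D F : (ℤ → E) → (ℤ → E)} {g1 g2 : ℝ}
    (hD : g1 ∈ gainSet D) (hF : g2 ∈ gainSet F) (hg : g1 * g2 < 1)
    {u1 u2 e1 e2 : ℤ → E} (hu1 : SeP u1) (hu2 : SeP u2) (he1S : SeP e1) (he2S : SeP e2)
    (he1 : e1 = u1 - F e2) (he2 : e2 = u2 + D e1) (T : ℤ) :
    normT T e1 + normT T e2 ≤
      (2 + g1 + g2) / (1 - g1 * g2) * (normT T u1 + normT T u2) := by
  have hFS : SeP (F e2) := by
    rw [show F e2 = u1 - e1 by rw [he1]; abel]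
    exact hu1.sub he1S
  have hDS : SeP (D e1) := by
    rw [show D e1 = e2 - u2 by rw [he2]; abel]
    exact he2S.sub hu2
  refine add_le_of_small_gain (normT_nonneg T u1) (normT_nonneg T u2) hD.1 hF.1 hg ?_ ?_
  · calc normT T e1 ≤ normT T u1 + normT T (F e2) := he1 ▸ normT_sub_le T hu1 hFS
      _ ≤ normT T u1 + g2 * normT T e2 := by gcongr; exact hF.2 e2 he2S T
  · calc normT T e2 ≤ normT T u2 + normT T (D e1) := he2 ▸ normT_add_le T hu2 hDS
      _ ≤ normT T u2 + g1 * normT T e1 := by gcongr; exact hD.2 e1 he1S T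

lemma memS_and_memS_of_normT_add_le {C : ℝ} (hC : 0 ≤ C) {u1 u2 e1 e2 : ℤ → E}
    (he1 : SeP e1) (he2 : SeP e2) (hu1 : memS u1) (hu2 : memS u2)
    (h : ∀ T, normT T e1 + normT T e2 ≤ C * (normT T u1 + normT T u2)) :
    memS e1 ∧ memS e2 := by
  obtain ⟨-, M1, hM1⟩ := hu1
  obtain ⟨-, M2, hM2⟩ := hu2
  have hM : ∀ T, normT T e1 + normT T e2 ≤ C * (M1 + M2) :=
    fun T => (h T).trans (by gcongr <;> apply_assumption)
  exact ⟨⟨he1, C * (M1 + M2), fun T => by linarith [hM T, normT_nonneg T e2]⟩,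
    ⟨he2, C * (M1 + M2), fun T => by linarith [hM T, normT_nonneg T e1]⟩⟩

theorem stmt8_general (ρ : ℝ) (H1 H2 : (ℤ → E) → (ℤ → E))
    (hg1 : (gainSet (dirOp ρ H1)).Nonempty)
    (hg2 : (gainSet (fbOp ρ H2)).Nonempty)
    (hsmall : sInf (gainSet (dirOp ρ H1)) * sInf (gainSet (fbOp ρ H2)) < 1) :
    ∃ C : ℝ, ∀ u1 u2 e1 e2 : ℤ → E,
      SeP u1 → SeP u2 → SeP e1 → SeP e2 →
      e1 = u1 - fbOp ρ H2 e2 → e2 = u2 + dirOp ρ H1 e1 →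
      (∀ T : ℤ, normT T e1 + normT T e2 ≤ C * (normT T u1 + normT T u2)) ∧
      (memS u1 → memS u2 → memS e1 ∧ memS e2) := by
  obtain ⟨g1, hD, g2, hF, hg⟩ := exists_mem_gainSet_mul_lt_one hg1 hg2 hsmall
  have hC : 0 ≤ (2 + g1 + g2) / (1 - g1 * g2) :=
    div_nonneg (by linarith [hD.1, hF.1]) (by linarith)
  refine ⟨(2 + g1 + g2) / (1 - g1 * g2), fun u1 u2 e1 e2 hu1 hu2 he1S he2S he1 he2 => ?_⟩
  have hbound := normT_add_le_of_feedback hD hF hg hu1 hu2 he1S he2S he1 he2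
  exact ⟨hbound, fun hm1 hm2 => memS_and_memS_of_normT_add_le hC he1S he2S hm1 hm2 hbound⟩

/-- (Extended small gain theorem, version (ii)) For the well-posed loop
`e₁ = u₁ - (ρ∘H₂∘ρ⁻¹)e₂`, `e₂ = u₂ + (ρ⁻¹∘H₁∘ρ)e₁`, if
`γ⁰(ρ⁻¹∘H₁∘ρ) < ∞`, `γ⁰(ρ∘H₂∘ρ⁻¹) < ∞` and `γ⁰(ρ⁻¹∘H₁∘ρ)·γ⁰(ρ∘H₂∘ρ⁻¹) < 1`, then
`‖e₁‖_T + ‖e₂‖_T ≤ C(‖u₁‖_T + ‖u₂‖_T)` for all `T`; in particular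
`u₁, u₂ ∈ S^n` implies `e₁, e₂ ∈ S^n`. -/
theorem stmt8 (ρ : ℝ) (hρ : 0 < ρ) (H1 H2 : (ℤ → E) → (ℤ → E))
    (hg1 : (gainSet (dirOp ρ H1)).Nonempty)
    (hg2 : (gainSet (fbOp ρ H2)).Nonempty)
    (hsmall : sInf (gainSet (dirOp ρ H1)) * sInf (gainSet (fbOp ρ H2)) < 1) :
    ∃ C : ℝ, ∀ u1 u2 e1 e2 : ℤ → E,
      SeP u1 → SeP u2 → SeP e1 → SeP e2 →
      e1 = u1 - fbOp ρ H2 e2 → e2 = u2 + dirOp ρ H1 e1 →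
      (∀ T : ℤ, normT T e1 + normT T e2 ≤ C * (normT T u1 + normT T u2)) ∧
      (memS u1 → memS u2 → memS e1 ∧ memS e2) :=
  stmt8_general ρ H1 H2 hg1 hg2 hsmall
end
end

section
/- (Scalar frequency-domain positivity, discrete case) Let h : ℤ → ℝ be supported on t ≥ 0 with Σ_t |h(t)|ρ^{-t} < ∞ for some ρ > 0, and suppose Re ĥ(ρe^{iθ}) ≥ δ₁ for all θ, where ĥ(z) = Σ_{t≥0} h(t)z^{-t}. Then for every finitely supported x : ℤ → ℝ, Σ_t x(t)·Σ_τ h(t-τ)ρ^{τ-t}x(τ) ≥ δ₁ Σ_t x(t)². -/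
/-!
Put `g t = h t ρ⁻ᵗ`. Then `θ ↦ ĥ(ρ e^{iθ}) = Σ g t e^{-itθ}` is a continuous function on the circle
whose Fourier coefficients are `g`, so for the trigonometric polynomial `X θ = Σ x t e^{itθ}`
orthogonality of the characters gives `∫₀^{2π} ĥ(ρ e^{iθ}) |X θ|² dθ = 2π Σ_{t,τ} x t g(t - τ) x τ`,
which is `2π` times the quadratic form, and `∫₀^{2π} |X θ|² dθ = 2π Σ x t²` (Parseval). Taking real
parts and integrating `δ₁ ≤ Re ĥ(ρ e^{iθ})` against `|X|²` gives the inequality.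
-/

open Complex MeasureTheory
open scoped Real ComplexConjugate

noncomputable section

def hhat (h : ℤ → ℝ) (z : ℂ) : ℂ := ∑' t : ℤ, (h t : ℂ) * z ^ (-t)

lemma integral_exp_int_mul_I (k : ℤ) :
    ∫ θ in (0 : ℝ)..2 * π, cexp (k * θ * I) = if k = 0 then 2 * π else 0 := by
  split_ifs with hk
  · simp [hk]
  · have hkI : (k : ℂ) * I ≠ 0 := by simp [hk, I_ne_zero]
    have hperiod : cexp (k * I * (2 * π)) = 1 := by
      rw [show (k : ℂ) * I * (2 * π) = k * (2 * π * I) by ring, exp_int_mul, exp_two_pi_mul_I,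
        one_zpow]
    simp_rw [mul_right_comm _ _ I]
    rw [integral_exp_mul_complex hkI]
    push_cast
    simp [hperiod]

def toeplitzSymbol (g : ℤ → ℂ) (θ : ℝ) : ℂ := ∑' t : ℤ, g t * cexp (-t * θ * I)

def trigPoly (s : Finset ℤ) (x : ℤ → ℂ) (θ : ℝ) : ℂ := ∑ t ∈ s, x t * cexp (t * θ * I)

def toeplitzForm (g : ℤ → ℂ) (s : Finset ℤ) (x : ℤ → ℂ) : ℂ :=
  ∑ t ∈ s, ∑ τ ∈ s, x t * g (t - τ) * conj (x τ)

section toeplitzSymbol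

variable {g : ℤ → ℂ} (hg : Summable fun t => ‖g t‖)
include hg

lemma continuous_toeplitzSymbol : Continuous (toeplitzSymbol g) :=
  continuous_tsum (fun t => by fun_prop) hg fun t θ => by simp [norm_exp]

lemma integral_toeplitzSymbol_mul_exp (n : ℤ) :
    ∫ θ in (0 : ℝ)..2 * π, toeplitzSymbol g θ * cexp (n * θ * I) = 2 * π * g n := by
  have hterm : ∀ (t : ℤ) (θ : ℝ), g t * cexp (-t * θ * I) * cexp (n * θ * I) =
      g t * cexp ((n - t : ℤ) * θ * I) := fun t θ => by
    rw [mul_assoc, ← Complex.exp_add]; push_cast; ring_nf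
  have hsum : HasSum (fun t => ∫ θ in (0 : ℝ)..2 * π, g t * cexp ((n - t : ℤ) * θ * I))
      (∫ θ in (0 : ℝ)..2 * π, toeplitzSymbol g θ * cexp (n * θ * I)) := by
    refine intervalIntegral.hasSum_integral_of_dominated_convergence (fun t _ => ‖g t‖)
      (fun t => (by fun_prop : Continuous _).aestronglyMeasurable)
      (fun t => .of_forall fun θ _ => by simp [norm_exp]) (.of_forall fun _ _ => hg)
      intervalIntegrable_const (.of_forall fun θ _ => ?_)
    simp_rw [toeplitzSymbol, ← hterm, ← tsum_mul_right]
    have hsummable : Summable fun t => g t * cexp (-t * θ * I) :=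
      hg.of_norm_bounded fun t => by simp [norm_exp]
    exact (hsummable.mul_right (cexp (n * θ * I))).hasSum
  refine hsum.unique ?_
  simp_rw [intervalIntegral.integral_const_mul, integral_exp_int_mul_I, sub_eq_zero]
  convert hasSum_ite_eq n (2 * π * g n) using 2 with t
  rcases eq_or_ne t n with rfl | htn
  · simp [mul_comm]
  · simp [htn, htn.symm]

end toeplitzSymbol

lemma normSq_trigPoly (s : Finset ℤ) (x : ℤ → ℂ) (θ : ℝ) :
    (normSq (trigPoly s x θ) : ℂ) =
      ∑ t ∈ s, ∑ τ ∈ s, x t * conj (x τ) * cexp ((t - τ : ℤ) * θ * I) := by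
  rw [← mul_conj, trigPoly, map_sum, Finset.sum_mul_sum]
  refine Finset.sum_congr rfl fun t _ => Finset.sum_congr rfl fun τ _ => ?_
  rw [map_mul, ← exp_conj, mul_mul_mul_comm, ← Complex.exp_add]
  simp only [map_mul, conj_ofReal, map_intCast, conj_I]
  push_cast
  ring_nf

lemma integral_mul_normSq_trigPoly {F : ℝ → ℂ} (hF : Continuous F) {g : ℤ → ℂ}
    (hFg : ∀ n : ℤ, ∫ θ in (0 : ℝ)..2 * π, F θ * cexp (n * θ * I) = 2 * π * g n)
    (s : Finset ℤ) (x : ℤ → ℂ) :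
    ∫ θ in (0 : ℝ)..2 * π, F θ * normSq (trigPoly s x θ) =
      2 * π * toeplitzForm g s x := by
  have hexpand : ∀ θ : ℝ, F θ * normSq (trigPoly s x θ) =
      ∑ t ∈ s, ∑ τ ∈ s, x t * conj (x τ) * (F θ * cexp ((t - τ : ℤ) * θ * I)) := fun θ => by
    simp_rw [normSq_trigPoly, Finset.mul_sum]
    exact Finset.sum_congr rfl fun t _ => Finset.sum_congr rfl fun τ _ => by ring
  have hint : ∀ (c : ℂ) (n : ℤ),
      IntervalIntegrable (fun θ : ℝ => c * (F θ * cexp (n * θ * I))) volume 0 (2 * π) :=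
    fun c n => (by fun_prop : Continuous _).intervalIntegrable _ _
  simp_rw [hexpand]
  rw [intervalIntegral.integral_finsetSum fun t _ =>
    (by fun_prop : Continuous _).intervalIntegrable _ _]
  simp_rw [intervalIntegral.integral_finsetSum fun τ _ => hint _ _,
    intervalIntegral.integral_const_mul, hFg, toeplitzForm, Finset.mul_sum]
  exact Finset.sum_congr rfl fun t _ => Finset.sum_congr rfl fun τ _ => by ring

lemma integral_normSq_trigPoly (s : Finset ℤ) (x : ℤ → ℂ) :
    ∫ θ in (0 : ℝ)..2 * π, normSq (trigPoly s x θ) = 2 * π * ∑ t ∈ s, normSq (x t) := by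
  have hcoeff : ∀ n : ℤ, ∫ θ in (0 : ℝ)..2 * π, (1 : ℂ) * cexp (n * θ * I) =
      2 * π * if n = 0 then 1 else 0 := fun n => by
    split_ifs with hn <;> simp [integral_exp_int_mul_I, hn]
  have h := integral_mul_normSq_trigPoly continuous_const hcoeff s x
  simp only [toeplitzForm, one_mul, sub_eq_zero, mul_ite, mul_one, mul_zero, ite_mul, zero_mul,
    Finset.sum_ite_eq, Finset.sum_ite_mem, Finset.inter_self, mul_conj] at h
  rw [intervalIntegral.integral_ofReal] at h
  exact_mod_cast h

lemma mul_sum_normSq_le_re_toeplitzForm {g : ℤ → ℂ} (hg : Summable fun t => ‖g t‖) {δ : ℝ}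
    (hδ : ∀ θ, δ ≤ (toeplitzSymbol g θ).re) (s : Finset ℤ) (x : ℤ → ℂ) :
    δ * ∑ t ∈ s, normSq (x t) ≤ (toeplitzForm g s x).re := by
  have hcont : Continuous fun θ => normSq (trigPoly s x θ) := by unfold trigPoly; fun_prop
  have hint : IntervalIntegrable (fun θ => toeplitzSymbol g θ * normSq (trigPoly s x θ))
      volume 0 (2 * π) :=
    ((continuous_toeplitzSymbol hg).mul (continuous_ofReal.comp hcont)).intervalIntegrable _ _
  have hmono : ∫ θ in (0 : ℝ)..2 * π, δ * normSq (trigPoly s x θ) ≤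
      ∫ θ in (0 : ℝ)..2 * π, (toeplitzSymbol g θ).re * normSq (trigPoly s x θ) :=
    intervalIntegral.integral_mono_on (by positivity)
      ((continuous_const.mul hcont).intervalIntegrable _ _)
      (((continuous_re.comp (continuous_toeplitzSymbol hg)).mul hcont).intervalIntegrable _ _)
      fun θ _ => mul_le_mul_of_nonneg_right (hδ θ) (normSq_nonneg _)
  have hre : ∫ θ in (0 : ℝ)..2 * π, (toeplitzSymbol g θ).re * normSq (trigPoly s x θ) =
      2 * π * (toeplitzForm g s x).re := by
    have := intervalIntegral.intervalIntegral_re hint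
    simp only [RCLike.re_to_complex, re_mul_ofReal] at this
    rw [this, integral_mul_normSq_trigPoly (continuous_toeplitzSymbol hg)
      (integral_toeplitzSymbol_mul_exp hg)]
    simp
  rw [intervalIntegral.integral_const_mul, integral_normSq_trigPoly, hre] at hmono
  exact le_of_mul_le_mul_left (by linarith) Real.two_pi_pos

lemma hhat_ofReal_mul_exp (h : ℤ → ℝ) (ρ θ : ℝ) :
    hhat h (ρ * cexp (θ * I)) = toeplitzSymbol (fun t => ((h t * ρ ^ (-t) : ℝ) : ℂ)) θ := by
  refine tsum_congr fun t => ?_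
  rw [mul_zpow, ← exp_int_mul]
  push_cast
  ring_nf

theorem stmt17_general (ρ δ1 : ℝ) (hρ : 0 < ρ) (h : ℤ → ℝ)
    (hsum : Summable (fun t : ℤ => |h t| * ρ ^ (-t)))
    (hfreq : ∀ θ : ℝ, (hhat h ((ρ : ℂ) * Complex.exp (θ * Complex.I))).re ≥ δ1) :
    ∀ x : ℤ → ℝ, (Function.support x).Finite →
      (∑' t : ℤ, x t * ∑' τ : ℤ, h (t - τ) * ρ ^ (τ - t) * x τ)
        ≥ δ1 * ∑' t : ℤ, x t ^ 2 := by
  intro x hx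
  set s := hx.toFinset
  have hxs : ∀ t ∉ s, x t = 0 := by simp [s]
  have hg : Summable fun t => ‖((h t * ρ ^ (-t) : ℝ) : ℂ)‖ := by
    simpa [abs_mul, abs_of_pos hρ] using hsum
  have key := mul_sum_normSq_le_re_toeplitzForm hg (fun θ => hhat_ofReal_mul_exp h ρ θ ▸ hfreq θ) s
    (fun t => (x t : ℂ))
  have hsquares : ∑' t, x t ^ 2 = ∑ t ∈ s, normSq (x t : ℂ) := by
    rw [tsum_eq_sum (s := s) fun t ht => by simp [hxs t ht]]
    simp [sq]
  have hform : ∑' t, x t * ∑' τ, h (t - τ) * ρ ^ (τ - t) * x τ =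
      (toeplitzForm (fun t => ((h t * ρ ^ (-t) : ℝ) : ℂ)) s (fun t => (x t : ℂ))).re := by
    have hinner : ∀ t, ∑' τ, h (t - τ) * ρ ^ (τ - t) * x τ =
        ∑ τ ∈ s, h (t - τ) * ρ ^ (τ - t) * x τ :=
      fun t => tsum_eq_sum fun τ hτ => by simp [hxs τ hτ]
    rw [tsum_eq_sum (s := s) fun t ht => by simp [hxs t ht]]
    simp only [toeplitzForm, hinner, neg_sub, Finset.mul_sum, conj_ofReal, ← ofReal_mul,
      ← ofReal_sum, ofReal_re]
    exact Finset.sum_congr rfl fun t _ => Finset.sum_congr rfl fun τ _ => by ring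
  rw [hform, hsquares]
  exact key

/-- (Scalar frequency-domain positivity, discrete case) Let `h : ℤ → ℝ` be supported
on `t ≥ 0` with `Σ_t |h(t)|ρ^{-t} < ∞` for some `ρ > 0`, and suppose
`Re ĥ(ρe^{iθ}) ≥ δ₁` for all `θ`. Then for every finitely supported `x : ℤ → ℝ`,
`Σ_t x(t)·Σ_τ h(t-τ)ρ^{τ-t}x(τ) ≥ δ₁ Σ_t x(t)²`. -/
theorem stmt17 (ρ δ1 : ℝ) (hρ : 0 < ρ) (h : ℤ → ℝ)
    (hcausal : ∀ t : ℤ, t < 0 → h t = 0)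
    (hsum : Summable (fun t : ℤ => |h t| * ρ ^ (-t)))
    (hfreq : ∀ θ : ℝ, (hhat h ((ρ : ℂ) * Complex.exp (θ * Complex.I))).re ≥ δ1) :
    ∀ x : ℤ → ℝ, (Function.support x).Finite →
      (∑' t : ℤ, x t * ∑' τ : ℤ, h (t - τ) * ρ ^ (τ - t) * x τ)
        ≥ δ1 * ∑' t : ℤ, x t ^ 2 :=
  stmt17_general ρ δ1 hρ h hsum hfreq
end
end
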